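/- arXiv:2009.06232 — 6 statements merged into one kernel-verified Lean document; each statement's English description precedes it below -/
import Mathlib

section
/- Consider f = a₂₂x₀²y₂² + x₀x₁(b₂₂y₂² + b₀₂y₀y₂ + b₁₂y₁y₂) + x₁²(c₀₀y₀² + c₁₁y₁² + c₂₂y₂² + c₀₁y₀y₁ + c₀₂y₀y₂ + c₁₂y₁y₂). Under the substitution (x₀,x₁,y₀,y₁,y₂) ↦ (t⁻³x₀, t³x₁, t⁻²y₀, t⁻²y₁, t⁴y₂), every monomial appearing in f is multiplied by a strictly positive power of t, so the limit as t → 0 is 0. -/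
/-- Under the 1-PS λ(t) = diag(t⁻³,t³) × diag(t⁻²,t⁻²,t⁴), the rescaled (2,2)-form
f = a₂₂x₀²y₂² + x₀x₁(b₂₂y₂²+b₀₂y₀y₂+b₁₂y₁y₂)
  + x₁²(c₀₀y₀²+c₁₁y₁²+c₂₂y₂²+c₀₁y₀y₁+c₀₂y₀y₂+c₁₂y₁y₂) tends to 0 as t → 0. -/
theorem stmt_7 (a22 b22 b02 b12 c00 c11 c22 c01 c02 c12 : ℂ)
    (x0 x1 y0 y1 y2 : ℂ) :
    Filter.Tendsto (fun t : ℂ =>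
      a22 * (t⁻¹^3 * x0)^2 * (t^4 * y2)^2
      + (t⁻¹^3 * x0) * (t^3 * x1) * (b22 * (t^4 * y2)^2
          + b02 * (t⁻¹^2 * y0) * (t^4 * y2) + b12 * (t⁻¹^2 * y1) * (t^4 * y2))
      + (t^3 * x1)^2 * (c00 * (t⁻¹^2 * y0)^2 + c11 * (t⁻¹^2 * y1)^2
          + c22 * (t^4 * y2)^2 + c01 * (t⁻¹^2 * y0) * (t⁻¹^2 * y1)
          + c02 * (t⁻¹^2 * y0) * (t^4 * y2) + c12 * (t⁻¹^2 * y1) * (t^4 * y2)))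
      (nhdsWithin 0 {(0 : ℂ)}ᶜ) (nhds 0) := by
  set g : ℂ → ℂ := fun t =>
    a22 * x0^2 * y2^2
    + x0 * x1 * (b22 * t^6 * y2^2 + b02 * y0 * y2 + b12 * y1 * y2)
    + x1^2 * (c00 * y0^2 + c11 * y1^2 + c22 * t^12 * y2^2 + c01 * y0 * y1
        + c02 * t^6 * y0 * y2 + c12 * t^6 * y1 * y2) with hg
  have hlim : Filter.Tendsto (fun t : ℂ => t^2 * g t) (nhds 0) (nhds 0) := by
    have hc : ContinuousAt (fun t : ℂ => t^2 * g t) 0 := by fun_prop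
    have := hc.tendsto
    simpa [hg] using this
  refine Filter.Tendsto.congr' ?_ (hlim.mono_left nhdsWithin_le_nhds)
  filter_upwards [self_mem_nhdsWithin] with t ht
  have ht0 : t ≠ 0 := ht
  have hk : ∀ k : ℕ, t⁻¹^k * t^k = 1 := fun k => by
    rw [inv_pow]; exact inv_mul_cancel₀ (pow_ne_zero k ht0)
  simp only [hg]
  linear_combination (-(a22*x0^2*y2^2*t^2)) * hk 6 - (b22*x0*x1*y2^2*t^8) * hk 3
    - ((b02*y0 + b12*y1)*x0*x1*y2*t^2) * hk 5
    - ((c00*y0^2 + c11*y1^2 + c01*y0*y1)*x1^2*t^2) * hk 4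
    - ((c02*y0 + c12*y1)*x1^2*y2*t^8) * hk 2
end

section
/- Consider f = x₀²(a₂₂y₂² + a₁₂y₁y₂) + x₀x₁(b₂₂y₂² + b₀₂y₀y₂ + b₁₂y₁y₂) + x₁²(c₁₁y₁² + c₂₂y₂² + c₀₂y₀y₂ + c₁₂y₁y₂). Under the substitution (x₀,x₁,y₀,y₁,y₂) ↦ (t⁻²x₀, t²x₁, t⁻⁵y₀, t⁻¹y₁, t⁶y₂), every monomial of f acquires a strictly positive power of t, hence the limit of the rescaled polynomial as t → 0 is 0. -/
/-! Every monomial of `f` has strictly positive weight under `λ`, so for `t ≠ 0` the rescaled form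
is `t` times a polynomial in `t`: the weights are `1` (for `x₀²y₁y₂` and `x₀x₁y₀y₂`), `2`, `5`, `5`,
`8`, `9`, `12` and `16`. -/

open Filter Topology

theorem tendsto_nhdsNE_zero_of_eq_mul {M : Type*} [TopologicalSpace M] [MulZeroClass M]
    [ContinuousMul M] {f g : M → M} (hg : ContinuousAt g 0) (hfg : ∀ t ≠ 0, f t = t * g t) :
    Tendsto f (𝓝[≠] 0) (𝓝 0) := by
  have hlim : Tendsto (fun t => t * g t) (𝓝 0) (𝓝 0) := by
    simpa using tendsto_id.mul hg.tendsto
  exact (tendsto_nhdsWithin_of_tendsto_nhds hlim).congr'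
    (eventually_nhdsWithin_of_forall fun t ht => (hfg t ht).symm)

/-- Under the 1-PS λ(t) = diag(t⁻²,t²) × diag(t⁻⁵,t⁻¹,t⁶), the rescaled (2,2)-form
f = x₀²(a₂₂y₂²+a₁₂y₁y₂) + x₀x₁(b₂₂y₂²+b₀₂y₀y₂+b₁₂y₁y₂)
  + x₁²(c₁₁y₁²+c₂₂y₂²+c₀₂y₀y₂+c₁₂y₁y₂) tends to 0 as t → 0. -/
theorem stmt_8 (a22 a12 b22 b02 b12 c11 c22 c02 c12 : ℂ)
    (x0 x1 y0 y1 y2 : ℂ) :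
    Filter.Tendsto (fun t : ℂ =>
      (t⁻¹^2 * x0)^2 * (a22 * (t^6 * y2)^2 + a12 * (t⁻¹ * y1) * (t^6 * y2))
      + (t⁻¹^2 * x0) * (t^2 * x1) * (b22 * (t^6 * y2)^2
          + b02 * (t⁻¹^5 * y0) * (t^6 * y2) + b12 * (t⁻¹ * y1) * (t^6 * y2))
      + (t^2 * x1)^2 * (c11 * (t⁻¹ * y1)^2 + c22 * (t^6 * y2)^2
          + c02 * (t⁻¹^5 * y0) * (t^6 * y2) + c12 * (t⁻¹ * y1) * (t^6 * y2)))
      (nhdsWithin 0 {(0 : ℂ)}ᶜ) (nhds 0) := by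
  refine tendsto_nhdsNE_zero_of_eq_mul
    (g := fun t => t^7 * a22 * x0^2 * y2^2 + a12 * x0^2 * y1 * y2
      + t^11 * b22 * x0 * x1 * y2^2 + b02 * x0 * x1 * y0 * y2 + t^4 * b12 * x0 * x1 * y1 * y2
      + t * c11 * x1^2 * y1^2 + t^15 * c22 * x1^2 * y2^2 + t^4 * c02 * x1^2 * y0 * y2
      + t^8 * c12 * x1^2 * y1 * y2)
    (by fun_prop) fun t ht => ?_
  field_simp
  ring
end

section
/- For u, v ∈ ℂ and r ∈ ℂ*, the forms f_{u,v} = x₀²y₁y₂ + x₀x₁(u·y₁² + y₀y₂) + v·x₁²y₀y₁ and f_{ru,rv} satisfy g·f_{ru,rv} = r^{1/3} f_{u,v}, where g = diag(r^{1/4}, r^{-1/4}) × diag(r^{1/6}, r^{-1/3}, r^{1/6}) ∈ SL(2)×SL(3) acts by coordinate substitution. Hence the projective classes [f_{u,v}] and [f_{ru,rv}] lie in the same G-orbit in ℙ(V). -/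
/-- For r = w¹² (w ≠ 0 a fixed twelfth root), the coordinate change
g = diag(r^{1/4}, r^{-1/4}) × diag(r^{1/6}, r^{-1/3}, r^{1/6}) ∈ SL(2)×SL(3)
transforms f_{ru,rv} = x₀²y₁y₂ + x₀x₁(ru·y₁² + y₀y₂) + rv·x₁²y₀y₁ into
r^{1/3}·f_{u,v}. -/
theorem stmt_13 (w : ℂ) (hw : w ≠ 0) (u v : ℂ) :
    ∀ x0 x1 y0 y1 y2 : ℂ,
      (w^3 * x0)^2 * ((w⁻¹^4 * y1) * (w^2 * y2))
      + (w^3 * x0) * (w⁻¹^3 * x1) * ((w^12 * u) * (w⁻¹^4 * y1)^2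
          + (w^2 * y0) * (w^2 * y2))
      + (w^12 * v) * (w⁻¹^3 * x1)^2 * ((w^2 * y0) * (w⁻¹^4 * y1))
      = w^4 * (x0^2 * (y1 * y2) + x0 * x1 * (u * y1^2 + y0 * y2)
          + v * x1^2 * (y0 * y1)) := by
  intro x0 x1 y0 y1 y2
  have k : w⁻¹ * w = 1 := inv_mul_cancel₀ hw
  linear_combination (w^4*(w⁻¹^2*w^2+w⁻¹*w+1)*x0*y2*x1*y0 + w^4*(w⁻¹^3*w^3+w⁻¹^2*w^2+w⁻¹*w+1)*x0^2*y1*y2 + w^4*(w⁻¹^9*w^9+w⁻¹^8*w^8+w⁻¹^7*w^7+w⁻¹^6*w^6+w⁻¹^5*w^5+w⁻¹^4*w^4+w⁻¹^3*w^3+w⁻¹^2*w^2+w⁻¹*w+1)*y1*x1^2*y0*v + w^4*(w⁻¹^10*w^10+w⁻¹^9*w^9+w⁻¹^8*w^8+w⁻¹^7*w^7+w⁻¹^6*w^6+w⁻¹^5*w^5+w⁻¹^4*w^4+w⁻¹^3*w^3+w⁻¹^2*w^2+w⁻¹*w+1)*x0*y1^2*x1*u) * k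
end

section
/- Let f₁ = α₂x₀y₂ + x₁(β₀y₀+β₁y₁+β₂y₂) and f₂ = γ₂x₀y₂ + x₁(δ₀y₀+δ₁y₁+δ₂y₂) be (1,1)-forms (i.e., f₁ and f₂ have the same fibre Z(y₂) over [1,0] ∈ ℙ¹). Then under the substitution (x₀,x₁,y₀,y₁,y₂) ↦ (t⁻³x₀, t³x₁, t⁻²y₀, t⁻²y₁, t⁴y₂), every monomial of f = f₁f₂ has strictly positive t-weight, so λ(t)·f → 0 as t → 0; hence Z(f) is GIT-unstable. -/
/-- If f₁ = α₂x₀y₂ + x₁(β₀y₀+β₁y₁+β₂y₂) and f₂ = γ₂x₀y₂ + x₁(δ₀y₀+δ₁y₁+δ₂y₂)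
share the fibre Z(y₂) over [1,0], then under the 1-PS
λ(t) = diag(t⁻³,t³) × diag(t⁻²,t⁻²,t⁴) the product f₁f₂ tends to 0 as t → 0,
so Z(f₁f₂) is GIT-unstable. -/
theorem stmt_16 (a2 b0 b1 b2 g2 d0 d1 d2 : ℂ) (x0 x1 y0 y1 y2 : ℂ) :
    Filter.Tendsto (fun t : ℂ =>
      (a2 * (t⁻¹^3 * x0) * (t^4 * y2)
        + (t^3 * x1) * (b0 * (t⁻¹^2 * y0) + b1 * (t⁻¹^2 * y1) + b2 * (t^4 * y2)))
      * (g2 * (t⁻¹^3 * x0) * (t^4 * y2)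
        + (t^3 * x1) * (d0 * (t⁻¹^2 * y0) + d1 * (t⁻¹^2 * y1) + d2 * (t^4 * y2))))
      (nhdsWithin 0 {(0 : ℂ)}ᶜ) (nhds 0) := by
  have h : Filter.Tendsto (fun t : ℂ =>
      t^2 * ((a2 * x0 * y2 + x1 * (b0 * y0 + b1 * y1) + b2 * t^6 * x1 * y2)
        * (g2 * x0 * y2 + x1 * (d0 * y0 + d1 * y1) + d2 * t^6 * x1 * y2)))
      (nhdsWithin 0 {(0 : ℂ)}ᶜ) (nhds 0) := by
    have := (Continuous.tendsto (by continuity :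
      Continuous (fun t : ℂ =>
        t^2 * ((a2 * x0 * y2 + x1 * (b0 * y0 + b1 * y1) + b2 * t^6 * x1 * y2)
          * (g2 * x0 * y2 + x1 * (d0 * y0 + d1 * y1) + d2 * t^6 * x1 * y2)))) 0)
    simpa using this.mono_left nhdsWithin_le_nhds
  refine h.congr' ?_
  filter_upwards [self_mem_nhdsWithin] with t ht
  have ht : t ≠ 0 := ht
  field_simp
  ring
end

section
/- Let f₁ = α₂x₀y₂ + x₁(β₁y₁+β₂y₂) and f₂ = x₀(γ₁y₁+γ₂y₂) + x₁(δ₀y₀+δ₁y₁+δ₂y₂) be (1,1)-forms and f = f₁f₂. Under the substitution (x₀,x₁,y₀,y₁,y₂) ↦ (t⁻¹x₀, t x₁, t⁻²y₀, y₁, t²y₂), each monomial of f has nonnegative t-weight, and the limit of λ(t)·f as t → 0 equals (α₂x₀y₂ + β₁x₁y₁)(γ₁x₀y₁ + δ₀x₁y₀). -/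
/-- For f₁ = α₂x₀y₂ + x₁(β₁y₁+β₂y₂) and f₂ = x₀(γ₁y₁+γ₂y₂) + x₁(δ₀y₀+δ₁y₁+δ₂y₂),
under the 1-PS λ(t) = diag(t⁻¹,t) × diag(t⁻²,1,t²) the product f₁f₂ has a limit
as t → 0 equal to (α₂x₀y₂ + β₁x₁y₁)(γ₁x₀y₁ + δ₀x₁y₀). -/
theorem stmt_17 (a2 b1 b2 g1 g2 d0 d1 d2 : ℂ) (x0 x1 y0 y1 y2 : ℂ) :
    Filter.Tendsto (fun t : ℂ =>
      (a2 * (t⁻¹ * x0) * (t^2 * y2)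
        + (t * x1) * (b1 * y1 + b2 * (t^2 * y2)))
      * ((t⁻¹ * x0) * (g1 * y1 + g2 * (t^2 * y2))
        + (t * x1) * (d0 * (t⁻¹^2 * y0) + d1 * y1 + d2 * (t^2 * y2))))
      (nhdsWithin 0 {(0 : ℂ)}ᶜ)
      (nhds ((a2 * x0 * y2 + b1 * x1 * y1) * (g1 * x0 * y1 + d0 * x1 * y0))) := by
  have h : Filter.Tendsto (fun t : ℂ =>
      (a2 * x0 * y2 + b1 * x1 * y1 + b2 * x1 * y2 * t^2) *
      (g1 * x0 * y1 + d0 * x1 * y0 + g2 * x0 * y2 * t^2 + d1 * x1 * y1 * t^2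
        + d2 * x1 * y2 * t^4))
      (nhdsWithin 0 {(0 : ℂ)}ᶜ)
      (nhds ((a2 * x0 * y2 + b1 * x1 * y1) * (g1 * x0 * y1 + d0 * x1 * y0))) := by
    have := (Continuous.tendsto (by continuity :
      Continuous (fun t : ℂ =>
      (a2 * x0 * y2 + b1 * x1 * y1 + b2 * x1 * y2 * t^2) *
      (g1 * x0 * y1 + d0 * x1 * y0 + g2 * x0 * y2 * t^2 + d1 * x1 * y1 * t^2
        + d2 * x1 * y2 * t^4))) 0).mono_left (nhdsWithin_le_nhds (s := {(0 : ℂ)}ᶜ))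
    simpa using this
  refine h.congr' ?_
  filter_upwards [self_mem_nhdsWithin] with t ht
  have ht : t ≠ 0 := ht
  field_simp
  ring
end

section
/- Let f = y₂·(y₀x₀x₁ + y₁·g₁(x₀,x₁) + y₂·g₂(x₀,x₁)) where g₁, g₂ are quadratic forms in x₀, x₁. Under the substitution (x₀,x₁,y₀,y₁,y₂) ↦ (t⁻¹x₀, t x₁, t⁻³y₀, t⁻¹y₁, t⁴y₂), every monomial of f has strictly positive t-weight, hence λ(t)·f → 0 as t → 0 and Z(f) is GIT-unstable. -/
/-- For f = y₂(y₀x₀x₁ + y₁g₁(x₀,x₁) + y₂g₂(x₀,x₁)) with g₁, g₂ quadratic forms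
in x₀,x₁, under the 1-PS λ(t) = diag(t⁻¹,t) × diag(t⁻³,t⁻¹,t⁴) every monomial
has strictly positive t-weight, so λ(t)·f → 0 as t → 0 and Z(f) is unstable. -/
theorem stmt_19 (p0 p1 p2 q0 q1 q2 : ℂ) (x0 x1 y0 y1 y2 : ℂ) :
    Filter.Tendsto (fun t : ℂ =>
      (t^4 * y2) * ((t⁻¹^3 * y0) * (t⁻¹ * x0) * (t * x1)
        + (t⁻¹ * y1) * (p0 * (t⁻¹ * x0)^2 + p1 * (t⁻¹ * x0) * (t * x1)
            + p2 * (t * x1)^2)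
        + (t^4 * y2) * (q0 * (t⁻¹ * x0)^2 + q1 * (t⁻¹ * x0) * (t * x1)
            + q2 * (t * x1)^2)))
      (nhdsWithin 0 {(0 : ℂ)}ᶜ) (nhds 0) := by
  set g : ℂ → ℂ := fun t =>
    t * (y2 * (y0 * x0 * x1
      + y1 * (p0 * x0 ^ 2 + p1 * x0 * x1 * t ^ 2 + p2 * x1 ^ 2 * t ^ 4)
      + y2 * t ^ 5 * (q0 * x0 ^ 2 + q1 * x0 * x1 * t ^ 2 + q2 * x1 ^ 2 * t ^ 4)))
    with hgdef
  have hg : Filter.Tendsto g (nhdsWithin 0 {(0 : ℂ)}ᶜ) (nhds 0) := by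
    have hc : Continuous g := by fun_prop
    have := hc.tendsto 0
    have h0 : g 0 = 0 := by simp [hgdef]
    rw [h0] at this
    exact this.mono_left nhdsWithin_le_nhds
  apply hg.congr'
  filter_upwards [self_mem_nhdsWithin] with t ht
  have ht' : (t : ℂ) ≠ 0 := ht
  obtain ⟨s, hs⟩ : ∃ s : ℂ, s = t⁻¹ := ⟨_, rfl⟩
  have hts : t * s = 1 := by rw [hs]; exact mul_inv_cancel₀ ht'
  simp only [hgdef, ← hs]
  linear_combination -(y2*y0*x0*x1*t*((t*s)^3+(t*s)^2+t*s+1)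
    + y2*y1*p0*x0^2*t*((t*s)^2+t*s+1)
    + y2*y1*p1*x0*x1*t^3*(t*s+1)
    + y2*y1*p2*x1^2*t^5
    + y2^2*q0*x0^2*t^6*(t*s+1)
    + y2^2*q1*x0*x1*t^8) * hts
end
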